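/- (One step of the SCF iteration does not decrease the objective.) Let X ∈ 𝕆^{n×k} and suppose either θ ∈ {0,1} or tr(XᵀAX + XᵀD) ≥ 0. Let X̂ ∈ 𝕆^{n×k} satisfy tr(X̂ᵀ E(X) X̂) ≥ tr(Xᵀ E(X) X), let X̂ᵀD = UΣVᵀ be a singular value decomposition with U, V ∈ 𝕆^{k×k}, and set X' = X̂UVᵀ. Then f_θ(X') ≥ f_θ(X); and if tr(X̂ᵀ E(X) X̂) > tr(Xᵀ E(X) X), then f_θ(X') > f_θ(X). -/

import Mathlib

open Matrix

noncomputable section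

/-- `f_θ(X) = tr(XᵀAX + XᵀD) / (tr(XᵀBX))^θ`. -/
def fTheta {n k : ℕ} (A B : Matrix (Fin n) (Fin n) ℝ) (D : Matrix (Fin n) (Fin k) ℝ)
    (θ : ℝ) (X : Matrix (Fin n) (Fin k) ℝ) : ℝ :=
  (trace (Xᵀ * A * X) + trace (Xᵀ * D)) / trace (Xᵀ * B * X) ^ θ

/-- `f₁(X) = tr(XᵀAX + XᵀD) / tr(XᵀBX)`. -/
def f1 {n k : ℕ} (A B : Matrix (Fin n) (Fin n) ℝ) (D : Matrix (Fin n) (Fin k) ℝ)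
    (X : Matrix (Fin n) (Fin k) ℝ) : ℝ :=
  (trace (Xᵀ * A * X) + trace (Xᵀ * D)) / trace (Xᵀ * B * X)

/-- `E(X) = (2/(tr(XᵀBX))^θ) · [A + (DXᵀ + XDᵀ)/2 − θ f₁(X) B]`. -/
def Emat {n k : ℕ} (A B : Matrix (Fin n) (Fin n) ℝ) (D : Matrix (Fin n) (Fin k) ℝ)
    (θ : ℝ) (X : Matrix (Fin n) (Fin k) ℝ) : Matrix (Fin n) (Fin n) ℝ :=
  (2 / trace (Xᵀ * B * X) ^ θ) •
    (A + (2⁻¹ : ℝ) • (D * Xᵀ + X * Dᵀ) - (θ * f1 A B D X) • B)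

/-!
Let `p, q` be the numerator and denominator of `f_θ` at `X` and `q' = tr(X̂ᵀBX̂)`. Rotating `X̂` by
the orthogonal matrix `UVᵀ` changes neither `tr(X̂ᵀAX̂)` nor `q'`, and turns the linear term into
`tr(X'ᵀD) = ∑ σᵢ`, which dominates `tr(X̂ᵀDXᵀX̂)` because the diagonal entries of `(XV)ᵀ(X̂U)` are
at most `1`. Expanding the hypothesis on `E(X)` therefore gives `(1 - θ) p + θ (p/q) q' ≤ p'`,
where `p'` is the numerator at `X'`. Bernoulli's inequality `(q'/q)^θ ≤ 1 - θ + θ q'/q`, multiplied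
by `p`, turns this into `p/q^θ ≤ p'/q'^θ`.
-/

section Stiefel

variable {m k : Type*} [Fintype m] [DecidableEq k]

lemma card_le_rank_of_transpose_mul_self_eq_one [Fintype k] {R : Type*} [Field R]
    {X : Matrix m k R} (hX : Xᵀ * X = 1) : Fintype.card k ≤ X.rank := by
  simpa [hX, rank_one] using rank_mul_le_right Xᵀ X

open scoped MatrixOrder in
lemma trace_transpose_mul_mul_pos [Fintype k] {B : Matrix m m ℝ} (hB : B.PosSemidef)
    (hrank : Fintype.card m - Fintype.card k < B.rank) {X : Matrix m k ℝ} (hX : Xᵀ * X = 1) :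
    0 < trace (Xᵀ * B * X) := by
  refine lt_of_le_of_ne (by simpa using (hB.conjTranspose_mul_mul_same X).trace_nonneg)
    fun h => ?_
  classical
  obtain ⟨C, rfl⟩ := CStarAlgebra.nonneg_iff_eq_star_mul_self.mp hB.nonneg
  have hCX : C * X = 0 := by
    rw [← trace_conjTranspose_mul_self_eq_zero_iff, h]
    simp [Matrix.mul_assoc, star_eq_conjTranspose]
  have hker := rank_add_rank_le_card_of_mul_eq_zero (A := star C * C) (B := X)
    (by rw [Matrix.mul_assoc, hCX, Matrix.mul_zero])
  have := card_le_rank_of_transpose_mul_self_eq_one hX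
  omega

lemma trace_transpose_mul_mul_mul_orthogonal [Fintype k] {R : Type*} [CommRing R]
    (X : Matrix m k R) (M : Matrix m m R) {P : Matrix k k R} (hP : P * Pᵀ = 1) :
    trace ((X * P)ᵀ * M * (X * P)) = trace (Xᵀ * M * X) := by
  rw [transpose_mul, show Pᵀ * Xᵀ * M * (X * P) = Pᵀ * (Xᵀ * M * X * P) by
      simp only [Matrix.mul_assoc], trace_mul_comm, Matrix.mul_assoc, hP, Matrix.mul_one]

lemma trace_transpose_mul_of_svd [Fintype k] {R : Type*} [CommRing R] {Xh : Matrix m k R}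
    {D : Matrix m k R} {U V : Matrix k k R} (hU : Uᵀ * U = 1) (hV : Vᵀ * V = 1) {σ : k → R}
    (hSVD : Xhᵀ * D = U * diagonal σ * Vᵀ) :
    trace ((Xh * U * Vᵀ)ᵀ * D) = ∑ i, σ i := by
  have : (Xh * U * Vᵀ)ᵀ * D = V * diagonal σ * Vᵀ := by
    simp only [transpose_mul, transpose_transpose, Matrix.mul_assoc, hSVD]
    simp only [← Matrix.mul_assoc, hU, Matrix.one_mul]
  rw [this, trace_mul_cycle, hV, Matrix.one_mul, trace_diagonal]

lemma transpose_mul_apply_self_le_one {Y Z : Matrix m k ℝ} (hY : Yᵀ * Y = 1)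
    (hZ : Zᵀ * Z = 1) (i : k) : (Yᵀ * Z) i i ≤ 1 := by
  have hYi : ∑ j, Y j i * Y j i = 1 := by simpa [mul_apply] using congr_fun (congr_fun hY i) i
  have hZi : ∑ j, Z j i * Z j i = 1 := by simpa [mul_apply] using congr_fun (congr_fun hZ i) i
  have hsq : ∑ j, (Y j i - Z j i) ^ 2
      = ∑ j, Y j i * Y j i + ∑ j, Z j i * Z j i - 2 * ∑ j, Y j i * Z j i := by
    rw [Finset.mul_sum, ← Finset.sum_add_distrib, ← Finset.sum_sub_distrib]
    exact Finset.sum_congr rfl fun j _ => by ring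
  have := Finset.sum_nonneg fun j (_ : j ∈ Finset.univ) => sq_nonneg (Y j i - Z j i)
  simp only [mul_apply, transpose_apply]
  linarith

lemma trace_svd_mul_transpose_mul_le [Fintype k] {Y Z : Matrix m k ℝ} (hY : Yᵀ * Y = 1)
    (hZ : Zᵀ * Z = 1) {U V : Matrix k k ℝ} (hU : Uᵀ * U = 1) (hV : Vᵀ * V = 1) {σ : k → ℝ}
    (hσ : ∀ i, 0 ≤ σ i) :
    trace (U * diagonal σ * Vᵀ * (Yᵀ * Z)) ≤ ∑ i, σ i := by
  have hYV : (Y * V)ᵀ * (Y * V) = 1 := by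
    rw [transpose_mul, Matrix.mul_assoc, ← Matrix.mul_assoc Yᵀ, hY, Matrix.one_mul, hV]
  have hZU : (Z * U)ᵀ * (Z * U) = 1 := by
    rw [transpose_mul, Matrix.mul_assoc, ← Matrix.mul_assoc Zᵀ, hZ, Matrix.one_mul, hU]
  calc trace (U * diagonal σ * Vᵀ * (Yᵀ * Z))
      = trace (diagonal σ * ((Y * V)ᵀ * (Z * U))) := by
        rw [Matrix.mul_assoc, Matrix.mul_assoc, trace_mul_comm]
        simp only [transpose_mul, Matrix.mul_assoc]
    _ = ∑ i, σ i * ((Y * V)ᵀ * (Z * U)) i i := by simp [trace, diagonal_mul]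
    _ ≤ ∑ i, σ i := Finset.sum_le_sum fun i _ =>
        mul_le_of_le_one_right (hσ i) (transpose_mul_apply_self_le_one hYV hZU i)

end Stiefel

lemma mul_rpow_le_mul_one_sub_add_mul {p t θ : ℝ} (ht : 0 ≤ t) (hθ0 : 0 ≤ θ) (hθ1 : θ ≤ 1)
    (hcase : (θ = 0 ∨ θ = 1) ∨ 0 ≤ p) : p * t ^ θ ≤ p * (1 - θ + θ * t) := by
  rcases hcase with (rfl | rfl) | hp
  · simp
  · simp
  · refine mul_le_mul_of_nonneg_left ?_ hp
    have := rpow_one_add_le_one_add_mul_self (s := t - 1) (by linarith) hθ0 hθ1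
    rw [add_sub_cancel] at this
    linarith

lemma div_rpow_le_linearized_div_rpow {p q q' θ : ℝ} (hq : 0 < q) (hq' : 0 < q')
    (hθ0 : 0 ≤ θ) (hθ1 : θ ≤ 1) (hcase : (θ = 0 ∨ θ = 1) ∨ 0 ≤ p) :
    p / q ^ θ ≤ ((1 - θ) * p + θ * (p / q) * q') / q' ^ θ := by
  have hq'θ : 0 < q' ^ θ := Real.rpow_pos_of_pos hq' θ
  calc p / q ^ θ = p * (q' / q) ^ θ / q' ^ θ := by
        rw [Real.div_rpow hq'.le hq.le]
        field_simp
    _ ≤ p * (1 - θ + θ * (q' / q)) / q' ^ θ :=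
        div_le_div_of_nonneg_right
          (mul_rpow_le_mul_one_sub_add_mul (div_pos hq' hq).le hθ0 hθ1 hcase) hq'θ.le
    _ = ((1 - θ) * p + θ * (p / q) * q') / q' ^ θ := by ring

section SCF

variable {n k : ℕ} (A B : Matrix (Fin n) (Fin n) ℝ) (D : Matrix (Fin n) (Fin k) ℝ) (θ : ℝ)
  (X : Matrix (Fin n) (Fin k) ℝ)

lemma trace_transpose_mul_Emat_mul (Y : Matrix (Fin n) (Fin k) ℝ) :
    trace (Yᵀ * Emat A B D θ X * Y) = 2 / trace (Xᵀ * B * X) ^ θ *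
      (trace (Yᵀ * A * Y) + trace (Yᵀ * D * Xᵀ * Y) - θ * f1 A B D X * trace (Yᵀ * B * Y)) := by
  have hsymm : trace (Yᵀ * X * Dᵀ * Y) = trace (Yᵀ * D * Xᵀ * Y) := by
    rw [← trace_transpose]
    simp only [transpose_mul, transpose_transpose, Matrix.mul_assoc]
  simp only [Emat, Matrix.mul_smul, Matrix.smul_mul, Matrix.mul_add, Matrix.add_mul,
    Matrix.mul_sub, Matrix.sub_mul, trace_smul, trace_add, trace_sub, smul_eq_mul,
    ← Matrix.mul_assoc, hsymm]
  ring

lemma trace_transpose_mul_Emat_mul_self (hX : Xᵀ * X = 1) (hq : trace (Xᵀ * B * X) ≠ 0) :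
    trace (Xᵀ * Emat A B D θ X * X) = 2 / trace (Xᵀ * B * X) ^ θ *
      ((1 - θ) * (trace (Xᵀ * A * X) + trace (Xᵀ * D))) := by
  rw [trace_transpose_mul_Emat_mul, Matrix.mul_assoc _ Xᵀ, hX, Matrix.mul_one, f1,
    mul_assoc θ, div_mul_cancel₀ _ hq]
  ring

lemma fTheta_mul_mul_transpose_of_svd {Xh : Matrix (Fin n) (Fin k) ℝ}
    {U V : Matrix (Fin k) (Fin k) ℝ} (hU : Uᵀ * U = 1) (hV : Vᵀ * V = 1) {σ : Fin k → ℝ}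
    (hSVD : Xhᵀ * D = U * diagonal σ * Vᵀ) :
    fTheta A B D θ (Xh * U * Vᵀ) =
      (trace (Xhᵀ * A * Xh) + ∑ i, σ i) / trace (Xhᵀ * B * Xh) ^ θ := by
  have hP : U * Vᵀ * (U * Vᵀ)ᵀ = 1 := by
    rw [transpose_mul, transpose_transpose, Matrix.mul_assoc, ← Matrix.mul_assoc Vᵀ, hV,
      Matrix.one_mul, mul_eq_one_comm.mp hU]
  rw [fTheta, trace_transpose_mul_of_svd hU hV hSVD, Matrix.mul_assoc Xh,
    trace_transpose_mul_mul_mul_orthogonal _ _ hP,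
    trace_transpose_mul_mul_mul_orthogonal _ _ hP]

end SCF

theorem stmt15_general {n k : ℕ}
    (A B : Matrix (Fin n) (Fin n) ℝ) (hB : B.PosSemidef)
    (hrank : n - k < B.rank)
    (D : Matrix (Fin n) (Fin k) ℝ) (θ : ℝ) (hθ0 : 0 ≤ θ) (hθ1 : θ ≤ 1)
    (X : Matrix (Fin n) (Fin k) ℝ) (hX : Xᵀ * X = 1)
    (hcase : (θ = 0 ∨ θ = 1) ∨ 0 ≤ trace (Xᵀ * A * X) + trace (Xᵀ * D))
    (Xh : Matrix (Fin n) (Fin k) ℝ) (hXh : Xhᵀ * Xh = 1)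
    (htr : trace (Xᵀ * Emat A B D θ X * X) ≤ trace (Xhᵀ * Emat A B D θ X * Xh))
    (U V : Matrix (Fin k) (Fin k) ℝ) (hU : Uᵀ * U = 1) (hV : Vᵀ * V = 1)
    (σ : Fin k → ℝ) (hσpos : ∀ i, 0 ≤ σ i)
    (hSVD : Xhᵀ * D = U * Matrix.diagonal σ * Vᵀ)
    (X' : Matrix (Fin n) (Fin k) ℝ) (hX' : X' = Xh * U * Vᵀ) :
    fTheta A B D θ X ≤ fTheta A B D θ X'
      ∧ (trace (Xᵀ * Emat A B D θ X * X) < trace (Xhᵀ * Emat A B D θ X * Xh) →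
          fTheta A B D θ X < fTheta A B D θ X') := by
  have hrank' : Fintype.card (Fin n) - Fintype.card (Fin k) < B.rank := by simpa using hrank
  have hq := trace_transpose_mul_mul_pos hB hrank' hX
  have hq' := trace_transpose_mul_mul_pos hB hrank' hXh
  have hc : 0 < 2 / trace (Xᵀ * B * X) ^ θ := by positivity
  have hs : trace (Xhᵀ * D * Xᵀ * Xh) ≤ ∑ i, σ i := by
    rw [Matrix.mul_assoc (Xhᵀ * D), hSVD]
    exact trace_svd_mul_transpose_mul_le hX hXh hU hV hσpos
  have hmean := div_rpow_le_linearized_div_rpow hq hq' hθ0 hθ1 hcase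
  rw [trace_transpose_mul_Emat_mul_self A B D θ X hX hq.ne', trace_transpose_mul_Emat_mul,
    f1] at htr ⊢
  rw [mul_le_mul_iff_right₀ hc] at htr
  rw [mul_lt_mul_iff_right₀ hc, hX', fTheta_mul_mul_transpose_of_svd A B D θ hU hV hSVD,
    fTheta]
  refine ⟨hmean.trans (div_le_div_of_nonneg_right ?_ (by positivity)),
    fun hlt => hmean.trans_lt (div_lt_div_of_pos_right ?_ (by positivity))⟩ <;> linarith

/-- One step of the SCF iteration does not decrease the objective. -/
theorem stmt15 {n k : ℕ} (hk : 1 ≤ k) (hkn : k < n)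
    (A B : Matrix (Fin n) (Fin n) ℝ) (hA : A.IsSymm) (hB : B.PosSemidef)
    (hrank : n - k < B.rank)
    (D : Matrix (Fin n) (Fin k) ℝ) (θ : ℝ) (hθ0 : 0 ≤ θ) (hθ1 : θ ≤ 1)
    (X : Matrix (Fin n) (Fin k) ℝ) (hX : Xᵀ * X = 1)
    (hcase : (θ = 0 ∨ θ = 1) ∨ 0 ≤ trace (Xᵀ * A * X) + trace (Xᵀ * D))
    (Xh : Matrix (Fin n) (Fin k) ℝ) (hXh : Xhᵀ * Xh = 1)
    (htr : trace (Xᵀ * Emat A B D θ X * X) ≤ trace (Xhᵀ * Emat A B D θ X * Xh))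
    (U V : Matrix (Fin k) (Fin k) ℝ) (hU : Uᵀ * U = 1) (hV : Vᵀ * V = 1)
    (σ : Fin k → ℝ) (hσpos : ∀ i, 0 ≤ σ i)
    (hSVD : Xhᵀ * D = U * Matrix.diagonal σ * Vᵀ)
    (X' : Matrix (Fin n) (Fin k) ℝ) (hX' : X' = Xh * U * Vᵀ) :
    fTheta A B D θ X ≤ fTheta A B D θ X'
      ∧ (trace (Xᵀ * Emat A B D θ X * X) < trace (Xhᵀ * Emat A B D θ X * Xh) →
          fTheta A B D θ X < fTheta A B D θ X') :=
  stmt15_general A B hB hrank D θ hθ0 hθ1 X hX hcase Xh hXh htr U V hU hV σ hσpos hSVD X' hX'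

end
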